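/- Let X be a subshift over a finite alphabet Λ. Then Ω_X is invariant under the partial Bernoulli action of 𝔽: for every g ∈ 𝔽 and every ξ ∈ Ω_X with g⁻¹ ∈ ξ, the left translate gξ = {gh : h ∈ ξ} again lies in Ω_X (and contains g). -/

import Mathlib

/-!
If `g⁻¹ ∈ ξ_x`, write `g⁻¹ = αβ⁻¹` in reduced form with `x = αy`; then `g ξ_x = ξ_{βy}`. Indeed,
for `στ⁻¹ ∈ ξ_{βy}` the words `σ` and `β` are prefixes of the same infinite word, so one extends
the other, and in both cases `αβ⁻¹στ⁻¹` takes the form `α'τ'⁻¹` with `α'` a prefix of `αy`, `α'` and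
`τ'` followed by a common tail in `X`; cancelling the longest common suffix of `α'` and `τ'` puts it
in reduced form, so it lies in `ξ_{αy}`. The symmetric argument gives the reverse inclusion.
Since `{ξ | g⁻¹ ∈ ξ}` is open and translation by `g` is continuous on `2^𝔽`, the identity passes
from the dense set `{ξ_x}` to its closure `Ω_X`. Finally `1 ∈ ξ_x` for every `x`, hence `1 ∈ ξ` on
`Ω_X`, which is `g ∈ gξ`.
-/

open scoped Classical

namespace SubshiftPaper

variable {Λ : Type}

/-- The left shift on infinite words. -/
def shiftMap (x : ℕ → Λ) : ℕ → Λ := fun n => x (n + 1)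

/-- Concatenation of a finite word with an infinite word. -/
def cat (α : List Λ) (y : ℕ → Λ) : ℕ → Λ := fun n => α.getD n (y (n - α.length))

/-- `α` is a prefix of the infinite word `x`. -/
def Pref (α : List Λ) (x : ℕ → Λ) : Prop := ∀ (i : ℕ) (h : i < α.length), x i = α[i]

/-- The tail of `x` after `n` letters. -/
def tail (x : ℕ → Λ) (n : ℕ) : ℕ → Λ := fun i => x (n + i)

/-- `α` occurs in `x` at position `n`. -/
def OccursAt (α : List Λ) (x : ℕ → Λ) (n : ℕ) : Prop :=
  ∀ (i : ℕ) (h : i < α.length), x (n + i) = α[i]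

/-- `α` occurs in `x` (as a contiguous block of letters). -/
def Occurs (α : List Λ) (x : ℕ → Λ) : Prop := ∃ n, OccursAt α x n

/-- `X` is a subshift: a nonempty closed shift-invariant subset. -/
def IsSubshift [TopologicalSpace Λ] (X : Set (ℕ → Λ)) : Prop :=
  X.Nonempty ∧ IsClosed X ∧ ∀ x ∈ X, shiftMap x ∈ X

/-- The set of infinite words avoiding all words in `F`. -/
def ForbidSpace (F : Set (List Λ)) : Set (ℕ → Λ) := {x | ∀ α ∈ F, ¬ Occurs α x}

/-- `X` is a subshift of finite type. -/
def IsSFT (X : Set (ℕ → Λ)) : Prop := ∃ F : Set (List Λ), F.Finite ∧ X = ForbidSpace F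

/-- The follower set of a finite word. -/
def follower (X : Set (ℕ → Λ)) (α : List Λ) : Set (ℕ → Λ) := {y | y ∈ X ∧ cat α y ∈ X}

/-- The cylinder of a finite word. -/
def cylinder (X : Set (ℕ → Λ)) (α : List Λ) : Set (ℕ → Λ) := {x | x ∈ X ∧ Pref α x}

/-- The language of `X`. -/
def Language (X : Set (ℕ → Λ)) : Set (List Λ) := {α | ∃ x ∈ X, Occurs α x}

/-- The embedding of finite words into the free group. -/
def wd (α : List Λ) : FreeGroup Λ := (α.map FreeGroup.of).prod

/-- Indicator function of a set of group elements. -/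
noncomputable def chi (s : Set (FreeGroup Λ)) : FreeGroup Λ → Bool :=
  fun g => if g ∈ s then true else false

/-- The set `ξ_x ⊆ 𝔽`. -/
def xiSet [DecidableEq Λ] (X : Set (ℕ → Λ)) (x : ℕ → Λ) : Set (FreeGroup Λ) :=
  {g | ∃ α β : List Λ, g = wd α * (wd β)⁻¹ ∧
        FreeGroup.norm g = α.length + β.length ∧
        Pref α x ∧ tail x α.length ∈ follower X α ∩ follower X β}

/-- `ξ_x` as an element of `2^𝔽`. -/
noncomputable def xiB [DecidableEq Λ] (X : Set (ℕ → Λ)) (x : ℕ → Λ) : FreeGroup Λ → Bool :=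
  chi (xiSet X x)

/-- The spectrum `Ω_X`: the closure of `{ξ_x : x ∈ X}` in `2^𝔽`. -/
noncomputable def Omega [DecidableEq Λ] (X : Set (ℕ → Λ)) : Set (FreeGroup Λ → Bool) :=
  closure ((fun x => xiB X x) '' X)

/-- Left translation of an element of `2^𝔽`. -/
def translate (g : FreeGroup Λ) (ξ : FreeGroup Λ → Bool) : FreeGroup Λ → Bool :=
  fun h => ξ (g⁻¹ * h)

/-- `x` is the stem of `ξ`: `ξ ∩ 𝔽₊` is exactly the set of prefixes of `x`. -/
def IsStem (ξ : FreeGroup Λ → Bool) (x : ℕ → Λ) : Prop :=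
  {g | ξ g = true} ∩ {g | ∃ α : List Λ, g = wd α} =
    {g | ∃ α : List Λ, g = wd α ∧ Pref α x}

/-- `x` is the stem of `ξ` at `g`: `ξ ∩ g𝔽₊ = {gα : α is a prefix of x}`. -/
def IsStemAt (ξ : FreeGroup Λ → Bool) (g : FreeGroup Λ) (x : ℕ → Λ) : Prop :=
  {h | ξ h = true} ∩ {h | ∃ α : List Λ, h = g * wd α} =
    {h | ∃ α : List Λ, h = g * wd α ∧ Pref α x}

/-- The orbit of `ξ` under the spectral partial action. -/
def Orbit (ξ : FreeGroup Λ → Bool) : Set (FreeGroup Λ → Bool) :=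
  {η | ∃ g : FreeGroup Λ, ξ g⁻¹ = true ∧ η = translate g ξ}

/-- Topological freeness of the spectral partial action. -/
noncomputable def TopFree [DecidableEq Λ] (X : Set (ℕ → Λ)) : Prop :=
  ∀ g : FreeGroup Λ, g ≠ 1 →
    ∀ U : Set (FreeGroup Λ → Bool), IsOpen U →
      (U ∩ Omega X ⊆ {ξ | ξ g⁻¹ = true ∧ translate g ξ = ξ}) → U ∩ Omega X = ∅

/-- The periodic infinite word `γ^∞`. -/
noncomputable def perInf [Nonempty Λ] (γ : List Λ) : ℕ → Λ :=
  fun n => γ.getD (n % γ.length) (Classical.arbitrary Λ)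

/-- `n`-fold concatenation of a finite word with itself. -/
def rep : ℕ → List Λ → List Λ
  | 0, _ => []
  | n + 1, γ => γ ++ rep n γ

/-- `γ` is a circuit relative to `X`. -/
noncomputable def IsCircuit [Nonempty Λ] (X : Set (ℕ → Λ)) (γ : List Λ) : Prop :=
  γ ≠ [] ∧ perInf γ ∈ X

/-- `y` is an exit for the circuit `γ`. -/
noncomputable def IsExit [Nonempty Λ] (X : Set (ℕ → Λ)) (γ : List Λ) (y : ℕ → Λ) : Prop :=
  y ≠ perInf γ ∧ cat γ y ∈ X

/-- `z` is a strong exit for the circuit `γ`. -/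
noncomputable def IsStrongExit [Nonempty Λ] (X : Set (ℕ → Λ)) (γ : List Λ) (z : ℕ → Λ) : Prop :=
  z ≠ perInf γ ∧ ∀ n : ℕ, cat (rep n γ) z ∈ X

/-- The sets `X_g` of the standard partial action. -/
def Xg [DecidableEq Λ] (X : Set (ℕ → Λ)) (g : FreeGroup Λ) : Set (ℕ → Λ) :=
  {x | ∃ α β : List Λ, g = wd α * (wd β)⁻¹ ∧
        FreeGroup.norm g = α.length + β.length ∧
        ∃ y ∈ follower X α ∩ follower X β, x = cat α y}

/-- `x` is a fixed point for `θ_g`. -/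
def IsThetaFixed [DecidableEq Λ] (X : Set (ℕ → Λ)) (g : FreeGroup Λ) (x : ℕ → Λ) : Prop :=
  ∃ α β : List Λ, g = wd α * (wd β)⁻¹ ∧
    FreeGroup.norm g = α.length + β.length ∧
    ∃ y ∈ follower X α ∩ follower X β, x = cat β y ∧ cat α y = x

/-- `x` may be collectively reached from the finite set `B`. -/
def CollReached (X : Set (ℕ → Λ)) (B : Finset (List Λ)) (x : ℕ → Λ) : Prop :=
  ∃ α γ : List Λ, Pref α x ∧ ∀ β ∈ B, cat (β ++ γ) (tail x α.length) ∈ X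

/-- `X` is collectively cofinal. -/
def CollCofinal (X : Set (ℕ → Λ)) : Prop :=
  ∀ B : Finset (List Λ), ↑B ⊆ Language X → (⋂ β ∈ B, follower X β).Nonempty →
    ∀ x ∈ X, CollReached X B x

/-- `X` is strongly cofinal. -/
def StrongCofinal (X : Set (ℕ → Λ)) : Prop :=
  ∀ β ∈ Language X, ∃ M : ℕ, ∀ x ∈ X, ∃ α γ : List Λ, Pref α x ∧
    cat (β ++ γ) (tail x α.length) ∈ X ∧ α.length + γ.length ≤ M

/-- The even shift. -/
def evenShift : Set (ℕ → Fin 2) :=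
  ForbidSpace {w | ∃ n : ℕ, w = 0 :: (List.replicate (2 * n + 1) 1 ++ [0])}

section Words

variable {α β σ : List Λ} {x y z : ℕ → Λ}

lemma cat_apply_of_lt {n : ℕ} (h : n < α.length) : cat α y n = α[n] :=
  List.getD_eq_getElem _ _ h

lemma cat_apply_of_le {n : ℕ} (h : α.length ≤ n) : cat α y n = y (n - α.length) :=
  List.getD_eq_default _ _ h

@[simp]
lemma cat_nil (y : ℕ → Λ) : cat [] y = y := by
  funext n; simp [cat]

lemma cat_append (α β : List Λ) (y : ℕ → Λ) : cat (α ++ β) y = cat α (cat β y) := by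
  funext n
  rcases lt_or_ge n α.length with h | h
  · rw [cat_apply_of_lt (by simp; omega), cat_apply_of_lt h, List.getElem_append_left h]
  rcases lt_or_ge n (α.length + β.length) with h' | h'
  · rw [cat_apply_of_lt (by simp; omega), cat_apply_of_le h, cat_apply_of_lt (by omega),
      List.getElem_append_right h]
  · rw [cat_apply_of_le (by simp; omega), cat_apply_of_le h, cat_apply_of_le (by omega)]
    simp only [List.length_append, Nat.sub_sub]

@[simp]
lemma tail_cat (α : List Λ) (y : ℕ → Λ) : tail (cat α y) α.length = y := by
  funext i
  rw [tail, cat_apply_of_le (by omega), Nat.add_sub_cancel_left]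

lemma cat_right_injective (α : List Λ) : Function.Injective (cat α) := fun y z h => by
  rw [← tail_cat α y, h, tail_cat]

lemma pref_cat (α : List Λ) (y : ℕ → Λ) : Pref α (cat α y) := fun _ h => cat_apply_of_lt h

lemma Pref.cat_tail (h : Pref α x) : cat α (tail x α.length) = x := by
  funext n
  rcases lt_or_ge n α.length with hn | hn
  · rw [cat_apply_of_lt hn, h n hn]
  · rw [cat_apply_of_le hn, tail, Nat.add_sub_cancel' hn]

lemma Pref.prefix_of_length_le (hα : Pref α x) (hβ : Pref β x) (hl : α.length ≤ β.length) :
    α <+: β :=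
  List.prefix_iff_eq_take.2 <| List.ext_getElem (by simpa using hl) fun i h₁ h₂ => by
    rw [List.getElem_take, ← hα i h₁, hβ i (by omega)]

lemma cat_eq_cat_cases (h : cat σ z = cat β y) :
    (∃ ρ, β = σ ++ ρ ∧ z = cat ρ y) ∨ ∃ ρ, σ = β ++ ρ ∧ y = cat ρ z := by
  have hσ : Pref σ (cat β y) := h ▸ pref_cat σ z
  rcases le_total σ.length β.length with hl | hl
  · obtain ⟨ρ, rfl⟩ := hσ.prefix_of_length_le (pref_cat β y) hl
    exact Or.inl ⟨ρ, rfl, cat_right_injective σ (by rw [h, cat_append])⟩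
  · obtain ⟨ρ, rfl⟩ := (pref_cat β y).prefix_of_length_le hσ hl
    exact Or.inr ⟨ρ, rfl, cat_right_injective β (by rw [← h, cat_append])⟩

@[simp]
lemma tail_zero (x : ℕ → Λ) : tail x 0 = x :=
  funext fun i => congrArg x (zero_add i)

variable {X : Set (ℕ → Λ)}

lemma tail_mem (hX : ∀ x ∈ X, shiftMap x ∈ X) (hx : x ∈ X) (n : ℕ) : tail x n ∈ X := by
  induction n with
  | zero => rwa [tail_zero]
  | succ n ih =>
    have : tail x (n + 1) = shiftMap (tail x n) := by
      funext i; simp only [tail, shiftMap]; congr 1; omega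
    exact this ▸ hX _ ih

lemma mem_of_cat_mem (hX : ∀ x ∈ X, shiftMap x ∈ X) (h : cat α y ∈ X) : y ∈ X :=
  tail_cat α y ▸ tail_mem hX h α.length

end Words

section FreeGroup

@[simp]
lemma wd_append (α β : List Λ) : wd (α ++ β) = wd α * wd β := by
  simp [wd]

lemma wd_eq_mk (α : List Λ) : wd α = FreeGroup.mk (α.map fun a => (a, true)) := by
  induction α with
  | nil => rfl
  | cons a α ih =>
    simp only [wd, List.map_cons, List.prod_cons] at ih ⊢
    rw [ih, FreeGroup.of, FreeGroup.mul_mk]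
    rfl

lemma exists_append_common_suffix (α β : List Λ) :
    ∃ a b d : List Λ, α = a ++ d ∧ β = b ++ d ∧ ∀ c ∈ a.getLast?, ∀ c' ∈ b.getLast?, c ≠ c' := by
  induction α using List.reverseRecOn generalizing β with
  | nil => exact ⟨[], β, [], rfl, by simp, by simp⟩
  | append_singleton α c ih =>
    rcases List.eq_nil_or_concat β with rfl | ⟨β, c', rfl⟩
    · exact ⟨α ++ [c], [], [], by simp, rfl, by simp⟩
    by_cases hc : c = c'
    · obtain ⟨a, b, d, rfl, rfl, h⟩ := ih β
      exact ⟨a, b, d ++ [c], by simp, by simp [hc], h⟩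
    · exact ⟨α ++ [c], β ++ [c'], [], by simp, by simp, by simpa using hc⟩

variable [DecidableEq Λ]

lemma norm_wd_mul_inv_wd {α β : List Λ}
    (h : ∀ a ∈ α.getLast?, ∀ b ∈ β.getLast?, a ≠ b) :
    FreeGroup.norm (wd α * (wd β)⁻¹) = α.length + β.length := by
  have hred : FreeGroup.IsReduced
      (α.map (fun a => (a, true)) ++ (β.map fun b => (b, false)).reverse) := by
    refine List.IsChain.append ?_ ?_ ?_
    · exact (List.isChain_map _).2 (List.isChain_iff_getElem.2 fun _ _ _ => rfl)
    · exact List.isChain_reverse.2 <|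
        (List.isChain_map _).2 (List.isChain_iff_getElem.2 fun _ _ _ => rfl)
    · simp only [List.getLast?_map, List.head?_reverse, Option.mem_def,
        Option.map_eq_some_iff]
      rintro _ ⟨a, ha, rfl⟩ _ ⟨b, hb, rfl⟩ hab
      exact absurd hab (h a ha b hb)
  rw [wd_eq_mk, wd_eq_mk, FreeGroup.inv_mk, FreeGroup.mul_mk, FreeGroup.norm,
    FreeGroup.toWord_mk]
  simp only [FreeGroup.invRev, List.map_map, Function.comp_def, Bool.not_true]
  rw [hred.reduce_eq]
  simp

end FreeGroup

section Spectrum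

variable [DecidableEq Λ] {X : Set (ℕ → Λ)} {α β : List Λ} {x y : ℕ → Λ}

lemma xiB_eq_true_iff {g : FreeGroup Λ} : xiB X x g = true ↔ g ∈ xiSet X x := by
  simp [xiB, chi]

lemma one_mem_xiSet (hx : x ∈ X) : 1 ∈ xiSet X x :=
  ⟨[], [], rfl, by simp, fun _ h => absurd h (Nat.not_lt_zero _),
    by simpa [follower] using hx⟩

lemma wd_mul_inv_wd_mem_xiSet (hX : ∀ x ∈ X, shiftMap x ∈ X) (hα : cat α y ∈ X)
    (hβ : cat β y ∈ X) : wd α * (wd β)⁻¹ ∈ xiSet X (cat α y) := by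
  obtain ⟨a, b, d, rfl, rfl, hab⟩ := exists_append_common_suffix α β
  rw [cat_append] at hα hβ ⊢
  have hd : cat d y ∈ X := mem_of_cat_mem hX hα
  have heq : wd (a ++ d) * (wd (b ++ d))⁻¹ = wd a * (wd b)⁻¹ := by simp [mul_assoc]
  refine ⟨a, b, heq, heq ▸ norm_wd_mul_inv_wd hab, pref_cat a _, ?_⟩
  rw [tail_cat]
  exact ⟨⟨hd, hα⟩, hd, hβ⟩

lemma wd_mul_inv_wd_mul_mem_xiSet (hX : ∀ x ∈ X, shiftMap x ∈ X) (hα : cat α y ∈ X)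
    (hβ : cat β y ∈ X) {h : FreeGroup Λ} (hh : h ∈ xiSet X (cat β y)) :
    wd α * (wd β)⁻¹ * h ∈ xiSet X (cat α y) := by
  obtain ⟨σ, τ, rfl, -, hσ, -, -, hτ⟩ := hh
  have hσβ := hσ.cat_tail
  generalize tail (cat β y) σ.length = z at hσβ hτ
  rcases cat_eq_cat_cases hσβ with ⟨ρ, rfl, rfl⟩ | ⟨ρ, rfl, rfl⟩
  · have heq : wd α * (wd (σ ++ ρ))⁻¹ * (wd σ * (wd τ)⁻¹) = wd α * (wd (τ ++ ρ))⁻¹ := by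
      simp only [wd_append]; group
    rw [heq]
    exact wd_mul_inv_wd_mem_xiSet hX hα (by rwa [cat_append])
  · have heq : wd α * (wd β)⁻¹ * (wd (β ++ ρ) * (wd τ)⁻¹) = wd (α ++ ρ) * (wd τ)⁻¹ := by
      simp only [wd_append]; group
    rw [heq, ← cat_append]
    exact wd_mul_inv_wd_mem_xiSet hX (by rwa [cat_append]) hτ

lemma exists_translate_xiB_eq (hX : ∀ x ∈ X, shiftMap x ∈ X) {g : FreeGroup Λ}
    (hg : g⁻¹ ∈ xiSet X x) : ∃ x' ∈ X, translate g (xiB X x) = xiB X x' := by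
  obtain ⟨α, β, hg, -, hα, ⟨-, hαy⟩, -, hβy⟩ := hg
  have hx := hα.cat_tail
  generalize tail x α.length = y at hx hαy hβy
  subst hx
  refine ⟨cat β y, hβy, funext fun k => Bool.eq_iff_iff.2 ?_⟩
  simp only [translate, xiB_eq_true_iff]
  constructor
  · intro hk
    have hcancel : wd β * (wd α)⁻¹ * (g⁻¹ * k) = k := by rw [hg]; group
    exact hcancel ▸ wd_mul_inv_wd_mul_mem_xiSet hX hβy hαy hk
  · intro hk
    exact hg ▸ wd_mul_inv_wd_mul_mem_xiSet hX hαy hβy hk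

lemma apply_one_of_mem_Omega {ξ : FreeGroup Λ → Bool} (hξ : ξ ∈ Omega X) : ξ 1 = true := by
  refine closure_minimal ?_ ((isClosed_discrete {true}).preimage (continuous_apply 1)) hξ
  rintro _ ⟨x, hx, rfl⟩
  exact xiB_eq_true_iff.2 (one_mem_xiSet hx)

lemma translate_mem_Omega (hX : ∀ x ∈ X, shiftMap x ∈ X) {g : FreeGroup Λ}
    {ξ : FreeGroup Λ → Bool} (hξ : ξ ∈ Omega X) (h : ξ g⁻¹ = true) :
    translate g ξ ∈ Omega X := by
  have hU : IsOpen ((fun η : FreeGroup Λ → Bool => η g⁻¹) ⁻¹' {true}) :=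
    (isOpen_discrete _).preimage (continuous_apply g⁻¹)
  have hcont : Continuous (translate g : (FreeGroup Λ → Bool) → FreeGroup Λ → Bool) :=
    continuous_pi fun k => continuous_apply (g⁻¹ * k)
  have hsub : translate g '' ((fun η => η g⁻¹) ⁻¹' {true} ∩ (fun x => xiB X x) '' X) ⊆
      (fun x => xiB X x) '' X := by
    rintro _ ⟨_, ⟨hg, x, -, rfl⟩, rfl⟩
    obtain ⟨x', hx', he⟩ := exists_translate_xiB_eq hX (xiB_eq_true_iff.1 hg)
    exact ⟨x', hx', he.symm⟩
  exact closure_mono hsub <|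
    image_closure_subset_closure_image hcont ⟨ξ, hU.inter_closure ⟨h, hξ⟩, rfl⟩

end Spectrum

theorem omega_invariant_general {Λ : Type} [DecidableEq Λ] [TopologicalSpace Λ]
    (X : Set (ℕ → Λ)) (hX : IsSubshift X)
    (g : FreeGroup Λ) (ξ : FreeGroup Λ → Bool) (hξ : ξ ∈ Omega X)
    (h : ξ g⁻¹ = true) :
    translate g ξ ∈ Omega X ∧ translate g ξ g = true :=
  ⟨translate_mem_Omega hX.2.2 hξ h, by simpa [translate] using apply_one_of_mem_Omega hξ⟩

/-- `Ω_X` is invariant under the partial Bernoulli action. -/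
theorem omega_invariant {Λ : Type} [Fintype Λ] [Nonempty Λ] [DecidableEq Λ]
    [TopologicalSpace Λ] [DiscreteTopology Λ]
    (X : Set (ℕ → Λ)) (hX : IsSubshift X)
    (g : FreeGroup Λ) (ξ : FreeGroup Λ → Bool) (hξ : ξ ∈ Omega X)
    (h : ξ g⁻¹ = true) :
    translate g ξ ∈ Omega X ∧ translate g ξ g = true :=
  omega_invariant_general X hX g ξ hξ h

end SubshiftPaper
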